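/- The q-Fibonacci polynomials satisfy the recurrence F_n(x,s,q) = x·F_{n-1}(x,s,q) + q^{n-2}·s·F_{n-2}(x,s/q,q) for all n ≥ 2. -/

import Mathlib

/-! Since `qbinom a (n - k) k = 0` once `2 * k > n`, the three sums in the recurrence may be taken
over a common range of `k`. Termwise the recurrence is then the q-Pascal rule
`[m+1, k+1] = [m, k+1] + a^(m-k) [m, k]` with `m = n - k`: the first part gives `x * F_{n+1}`, and in
the second, `a^(n-2k) * a^((k+1)(k+2)/2) = a^(n+1) * a^(k(k+1)/2) * a^(-k)`, which is the shift `s ↦ s/a`. -/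

open Finset

noncomputable section

abbrev K : Type := RatFunc ℚ

def q : K := RatFunc.X

def qint (a : K) (m : ℕ) : K := ∑ i ∈ range m, a ^ i

def qfact (a : K) (m : ℕ) : K := ∏ i ∈ range m, qint a (i + 1)

def qbinom (a : K) (n k : ℕ) : K :=
  if k ≤ n then qfact a n / (qfact a k * qfact a (n - k)) else 0

/-- q-Fibonacci polynomials F_n(x,s,q) with base `a`. -/
def qF (a x s : K) : ℕ → K
  | 0 => 0
  | n + 1 => ∑ k ∈ range (n / 2 + 1),
      a ^ (k * (k + 1) / 2) * qbinom a (n - k) k * s ^ k * x ^ (n - 2 * k)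

/-- q-Lucas polynomials L_n(x,s,q) with base `a` (L_0 = 2). -/
def qL (a x s : K) (n : ℕ) : K :=
  if n = 0 then 2 else
  ∑ k ∈ range (n / 2 + 1),
    a ^ (k * (k - 1) / 2) * (qint a n / qint a (n - k)) * qbinom a (n - k) k
      * s ^ k * x ^ (n - 2 * k)

/-- Starred variant: L*_0 = 1, L*_n = L_n for n > 0. -/
def qLs (a x s : K) (n : ℕ) : K := if n = 0 then 1 else qL a x s n

/-- Rogers-Szegő polynomial. -/
def rs (a x y : K) (m : ℕ) : K := ∑ j ∈ range (m + 1), qbinom a m j * x ^ j * y ^ (m - j)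

/-- q-Pochhammer (q;q)_m. -/
def qpoch (a : K) (m : ℕ) : K := ∏ j ∈ range m, (1 - a ^ (j + 1))

lemma qint_add (a : K) (m n : ℕ) : qint a (m + n) = qint a m + a ^ m * qint a n := by
  simp only [qint, sum_range_add, mul_sum, pow_add]

lemma qfact_succ (a : K) (m : ℕ) : qfact a (m + 1) = qfact a m * qint a (m + 1) :=
  prod_range_succ _ _

lemma qfact_ne_zero {a : K} (ha : ∀ m, qint a (m + 1) ≠ 0) (m : ℕ) : qfact a m ≠ 0 :=
  prod_ne_zero_iff.mpr fun i _ => ha i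

lemma qbinom_of_lt (a : K) {n k : ℕ} (h : n < k) : qbinom a n k = 0 :=
  if_neg (Nat.not_le.mpr h)

lemma qfact_zero (a : K) : qfact a 0 = 1 :=
  prod_range_zero _

lemma qbinom_zero_right {a : K} (ha : ∀ m, qint a (m + 1) ≠ 0) (n : ℕ) : qbinom a n 0 = 1 := by
  simp [qbinom, qfact_zero, qfact_ne_zero ha n]

lemma qbinom_self {a : K} (ha : ∀ m, qint a (m + 1) ≠ 0) (n : ℕ) : qbinom a n n = 1 := by
  simp [qbinom, qfact_zero, qfact_ne_zero ha n]

lemma qbinom_succ_succ {a : K} (ha : ∀ m, qint a (m + 1) ≠ 0) (n k : ℕ) :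
    qbinom a (n + 1) (k + 1) = qbinom a n (k + 1) + a ^ (n - k) * qbinom a n k := by
  rcases lt_trichotomy k n with h | rfl | h
  · obtain ⟨d, rfl⟩ := Nat.exists_eq_add_of_lt h
    have hsplit : qint a (k + d + 1 + 1) = qint a (d + 1) + a ^ (d + 1) * qint a (k + 1) := by
      rw [← qint_add]; ring_nf
    simp only [qbinom, if_pos (by omega : k + 1 ≤ k + d + 1 + 1), if_pos (by omega : k + 1 ≤ k + d + 1),
      if_pos (by omega : k ≤ k + d + 1), show k + d + 1 + 1 - (k + 1) = d + 1 by omega,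
      show k + d + 1 - (k + 1) = d by omega, show k + d + 1 - k = d + 1 by omega,
      qfact_succ a (k + d + 1), qfact_succ a k, qfact_succ a d, hsplit]
    have hfact := qfact_ne_zero ha
    field_simp [ha, hfact]
  · simp [qbinom_self ha, qbinom_of_lt]
  · simp [qbinom_of_lt a (by omega : n < k), qbinom_of_lt a (by omega : n < k + 1),
      qbinom_of_lt a (by omega : n + 1 < k + 1)]

open Polynomial in
lemma qint_X_succ_ne_zero (m : ℕ) : qint q (m + 1) ≠ 0 := by
  have hpoly : (∑ i ∈ range (m + 1), (X : ℚ[X]) ^ i) ≠ 0 := fun h =>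
    Nat.cast_add_one_ne_zero m (by simpa [eval_finsetSum] using congrArg (eval 1) h)
  simpa [qint, q, ← RatFunc.algebraMap_X, ← map_pow, ← map_sum] using
    (map_ne_zero_iff _ (RatFunc.algebraMap_injective ℚ)).mpr hpoly

def qFTerm (a x s : K) (n k : ℕ) : K :=
  a ^ (k * (k + 1) / 2) * qbinom a (n - k) k * s ^ k * x ^ (n - 2 * k)

lemma qF_succ (a x s : K) (n : ℕ) : qF a x s (n + 1) = ∑ k ∈ range (n / 2 + 1), qFTerm a x s n k :=
  rfl

lemma qFTerm_of_lt (a x s : K) {n k : ℕ} (h : n < 2 * k) : qFTerm a x s n k = 0 := by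
  simp [qFTerm, qbinom_of_lt a (by omega : n - k < k)]

lemma qF_succ_eq_sum_range (a x s : K) {n N : ℕ} (hN : n / 2 + 1 ≤ N) :
    qF a x s (n + 1) = ∑ k ∈ range N, qFTerm a x s n k := by
  refine (qF_succ a x s n).trans (sum_subset (range_subset_range.mpr hN) fun k _ hk => ?_)
  exact qFTerm_of_lt a x s (by simp at hk; omega)

lemma qFTerm_zero {a : K} (ha : ∀ m, qint a (m + 1) ≠ 0) (x s : K) (n : ℕ) :
    qFTerm a x s n 0 = x ^ n := by
  simp [qFTerm, qbinom_zero_right ha]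

lemma qFTerm_succ_succ {a : K} (ha0 : a ≠ 0) (ha : ∀ m, qint a (m + 1) ≠ 0) (x s : K) (n k : ℕ) :
    qFTerm a x s (n + 2) (k + 1)
      = x * qFTerm a x s (n + 1) (k + 1) + a ^ (n + 1) * s * qFTerm a x (s / a) n k := by
  rcases lt_or_ge n (2 * k) with h | h
  · simp [qFTerm_of_lt a x _ h, qFTerm_of_lt a x s (by omega : n + 1 < 2 * (k + 1)),
      qFTerm_of_lt a x s (by omega : n + 2 < 2 * (k + 1))]
  obtain ⟨d, rfl⟩ := Nat.exists_eq_add_of_le h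
  have htri : (k + 1) * (k + 1 + 1) / 2 = k * (k + 1) / 2 + (k + 1) := by
    rw [show (k + 1) * (k + 1 + 1) = k * (k + 1) + (k + 1) * 2 by ring, Nat.add_mul_div_right _ _ two_pos]
  rcases d with _ | e
  · simp only [qFTerm, show 2 * k + 0 + 2 - (k + 1) = k + 1 by omega,
      show 2 * k + 0 + 1 - (k + 1) = k by omega, show 2 * k + 0 - k = k by omega,
      show 2 * k + 0 + 2 - 2 * (k + 1) = 0 by omega, show 2 * k + 0 - 2 * k = 0 by omega,
      qbinom_succ_succ ha, qbinom_of_lt a (Nat.lt_succ_self k), Nat.sub_self, htri, div_pow]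
    field_simp
    ring
  · simp only [qFTerm, show 2 * k + (e + 1) + 2 - (k + 1) = k + e + 1 + 1 by omega,
      show 2 * k + (e + 1) + 1 - (k + 1) = k + e + 1 by omega,
      show 2 * k + (e + 1) - k = k + e + 1 by omega,
      show 2 * k + (e + 1) + 2 - 2 * (k + 1) = e + 1 by omega,
      show 2 * k + (e + 1) + 1 - 2 * (k + 1) = e by omega,
      show 2 * k + (e + 1) - 2 * k = e + 1 by omega,
      qbinom_succ_succ ha, show k + e + 1 - k = e + 1 by omega, htri, div_pow]
    field_simp
    ring

theorem qF_add_two {a : K} (ha0 : a ≠ 0) (ha : ∀ m, qint a (m + 1) ≠ 0) (x s : K) (n : ℕ) :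
    qF a x s (n + 2) = x * qF a x s (n + 1) + a ^ n * s * qF a x (s / a) n := by
  rcases n with _ | l
  · simp [qF, qbinom_zero_right ha]
  rw [qF_succ_eq_sum_range a x s (by omega : (l + 2) / 2 + 1 ≤ l + 3),
    qF_succ_eq_sum_range a x s (by omega : (l + 1) / 2 + 1 ≤ l + 3),
    qF_succ_eq_sum_range a x (s / a) (by omega : l / 2 + 1 ≤ l + 2),
    sum_range_succ', sum_range_succ' _ (l + 2), qFTerm_zero ha, qFTerm_zero ha,
    sum_congr rfl fun k _ => qFTerm_succ_succ ha0 ha x s l k,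
    sum_add_distrib, mul_add, mul_sum, mul_sum]
  ring

theorem stmt1 (x s : K) (n : ℕ) (hn : 2 ≤ n) :
    qF q x s n = x * qF q x s (n - 1) + q ^ (n - 2) * s * qF q x (s / q) (n - 2) := by
  obtain ⟨m, rfl⟩ := Nat.exists_eq_add_of_le' hn
  simpa only [Nat.add_sub_cancel, show m + 2 - 1 = m + 1 by omega] using
    qF_add_two (a := q) RatFunc.X_ne_zero qint_X_succ_ne_zero x s m
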